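/- arXiv:2511.04931 — 4 statements merged into one kernel-verified Lean document; each statement's English description precedes it below -/
import Mathlib

section
/- Let q ≥ 2 and let 𝓛 be a set of lines of PG(7,q^3) satisfying properties (Pt), (Pl) and (Sd). Then no four lines of 𝓛 form a quadrangle; that is, there do not exist four distinct lines L1, L2, L3, L4 of 𝓛 such that cyclically consecutive lines (L1 and L2, L2 and L3, L3 and L4, L4 and L1) meet while the two pairs of non-consecutive lines (L1 and L3, L2 and L4) have zero intersection. -/
/-!
Suppose `L₁ L₂ L₃ L₄` were a quadrangle. The lines `L₂` and `L₄` both meet the skew lines `L₁`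
and `L₃`, so all four lie in the solid `S = L₁ ⊔ L₃`. The planes `L₁ ⊔ L₂`, `L₂ ⊔ L₃`, `L₃ ⊔ L₄`
each contain two lines of `𝓛`, hence `q + 1` by (Pl); no two of them coincide, since no plane
contains two skew lines, so any two of them share at most one line. Thus `S` contains at least
`3 (q + 1) - 3 = 3 q > 2 q + 1` lines of `𝓛`, contradicting (Sd).
-/

open Module

theorem Set.ncard_add_ncard_add_ncard_le {α : Type*} {A B C : Set α}
    (hA : A.Finite := by toFinite_tac) (hB : B.Finite := by toFinite_tac)
    (hC : C.Finite := by toFinite_tac) :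
    A.ncard + B.ncard + C.ncard ≤
      (A ∪ B ∪ C).ncard + (A ∩ B).ncard + (A ∩ C).ncard + (B ∩ C).ncard := by
  have hAB := ncard_union_add_ncard_inter A B hA hB
  have hABC := ncard_union_add_ncard_inter (A ∪ B) C (hA.union hB) hC
  have hABC_inter : ((A ∪ B) ∩ C).ncard ≤ (A ∩ C).ncard + (B ∩ C).ncard :=
    union_inter_distrib_right A B C ▸ ncard_union_le _ _
  omega

namespace Submodule

variable {F V : Type*} [Field F] [AddCommGroup V] [Module F V] [FiniteDimensional F V]

theorem finrank_inf_lt_of_ne {L L' : Submodule F V} (h : finrank F L = finrank F L')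
    (hne : L ≠ L') : finrank F ↥(L ⊓ L') < finrank F L :=
  finrank_lt_finrank_of_lt <| inf_le_left.lt_of_ne fun hinf =>
    hne <| eq_of_le_of_finrank_eq (hinf ▸ inf_le_right) h

theorem finrank_sup_of_inf_eq_bot {L L' : Submodule F V} (h : L ⊓ L' = ⊥) :
    finrank F ↥(L ⊔ L') = finrank F L + finrank F L' := by
  have := finrank_sup_add_finrank_inf_eq L L'
  rwa [h, finrank_bot, add_zero] at this

theorem finrank_sup_eq_three {L L' : Submodule F V} (hL : finrank F L = 2)
    (hL' : finrank F L' = 2) (hne : L ≠ L') (hmeet : L ⊓ L' ≠ ⊥) :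
    finrank F ↥(L ⊔ L') = 3 := by
  have hpos : finrank F ↥(L ⊓ L') ≠ 0 := finrank_eq_zero.not.mpr hmeet
  have hlt := finrank_inf_lt_of_ne (hL.trans hL'.symm) hne
  have := finrank_sup_add_finrank_inf_eq L L'
  omega

theorem le_sup_of_inf_ne_bot {L L₁ L₃ : Submodule F V} (hL : finrank F L = 2)
    (h₁₃ : L₁ ⊓ L₃ = ⊥) (h₁ : L ⊓ L₁ ≠ ⊥) (h₃ : L ⊓ L₃ ≠ ⊥) : L ≤ L₁ ⊔ L₃ := by
  have hdisj : (L ⊓ L₁) ⊓ (L ⊓ L₃) = ⊥ :=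
    eq_bot_iff.mpr (h₁₃ ▸ inf_le_inf inf_le_right inf_le_right)
  have hpos₁ : finrank F ↥(L ⊓ L₁) ≠ 0 := finrank_eq_zero.not.mpr h₁
  have hpos₃ : finrank F ↥(L ⊓ L₃) ≠ 0 := finrank_eq_zero.not.mpr h₃
  have hspan : (L ⊓ L₁) ⊔ (L ⊓ L₃) = L :=
    eq_of_le_of_finrank_le (sup_le inf_le_left inf_le_left)
      (by rw [finrank_sup_of_inf_eq_bot hdisj]; omega)
  exact hspan ▸ sup_le_sup inf_le_right inf_le_right

theorem ne_of_inf_eq_bot {L L' π π' : Submodule F V} (h : L ⊓ L' = ⊥) (hL : L ≤ π)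
    (hL' : L' ≤ π') (hπ : finrank F π < finrank F L + finrank F L') : π ≠ π' := by
  rintro rfl
  exact hπ.not_ge (finrank_sup_of_inf_eq_bot h ▸ finrank_mono (sup_le hL hL'))

theorem eq_of_le_inf_of_ne {n : ℕ} {M M' π π' : Submodule F V} (hM : finrank F M = n)
    (hM' : finrank F M' = n) (hπ : finrank F π = n + 1) (hπ' : finrank F π' = n + 1)
    (hne : π ≠ π') (hMπ : M ≤ π ⊓ π') (hM'π : M' ≤ π ⊓ π') : M = M' := by
  have hlt := finrank_inf_lt_of_ne (hπ.trans hπ'.symm) hne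
  rw [eq_of_le_of_finrank_le hMπ (by omega), eq_of_le_of_finrank_le hM'π (by omega)]

end Submodule

open Submodule

section LineSet

variable {F V : Type*} [Field F] [AddCommGroup V] [Module F V] [Finite V]
  {𝓛 : Set (Submodule F V)} {q : ℕ}

theorem ncard_lines_le_sup_eq_succ
    (hPl : ∀ π : Submodule F V, finrank F π = 3 →
      {L | L ∈ 𝓛 ∧ L ≤ π}.ncard = 0 ∨ {L | L ∈ 𝓛 ∧ L ≤ π}.ncard = 1 ∨
        {L | L ∈ 𝓛 ∧ L ≤ π}.ncard = q + 1)
    {M M' : Submodule F V} (hM : M ∈ 𝓛) (hM' : M' ∈ 𝓛) (hne : M ≠ M')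
    (hMM' : finrank F ↥(M ⊔ M') = 3) : {L | L ∈ 𝓛 ∧ L ≤ M ⊔ M'}.ncard = q + 1 := by
  have htwo : 1 < {L | L ∈ 𝓛 ∧ L ≤ M ⊔ M'}.ncard :=
    (Set.one_lt_ncard_iff (Set.toFinite _)).mpr
      ⟨M, M', ⟨hM, le_sup_left⟩, ⟨hM', le_sup_right⟩, hne⟩
  rcases hPl _ hMM' with h | h | h <;> omega

theorem ncard_lines_le_inter_le_one (hline : ∀ L ∈ 𝓛, finrank F L = 2)
    {π π' : Submodule F V} (hπ : finrank F π = 3) (hπ' : finrank F π' = 3) (hne : π ≠ π') :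
    ({L | L ∈ 𝓛 ∧ L ≤ π} ∩ {L | L ∈ 𝓛 ∧ L ≤ π'}).ncard ≤ 1 := by
  rw [Set.ncard_le_one (Set.toFinite _)]
  rintro M ⟨⟨hM, hMπ⟩, -, hMπ'⟩ M' ⟨⟨hM', hM'π⟩, -, hM'π'⟩
  exact eq_of_le_inf_of_ne (hline M hM) (hline M' hM') hπ hπ' hne
    (le_inf hMπ hMπ') (le_inf hM'π hM'π')

theorem three_mul_le_ncard_lines_le_sup_of_quadrangle (hline : ∀ L ∈ 𝓛, finrank F L = 2)
    (hPl : ∀ π : Submodule F V, finrank F π = 3 →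
      {L | L ∈ 𝓛 ∧ L ≤ π}.ncard = 0 ∨ {L | L ∈ 𝓛 ∧ L ≤ π}.ncard = 1 ∨
        {L | L ∈ 𝓛 ∧ L ≤ π}.ncard = q + 1)
    {L₁ L₂ L₃ L₄ : Submodule F V} (h₁ : L₁ ∈ 𝓛) (h₂ : L₂ ∈ 𝓛) (h₃ : L₃ ∈ 𝓛) (h₄ : L₄ ∈ 𝓛)
    (h₁₂ne : L₁ ≠ L₂) (h₂₃ne : L₂ ≠ L₃) (h₃₄ne : L₃ ≠ L₄)
    (h₁₂ : L₁ ⊓ L₂ ≠ ⊥) (h₂₃ : L₂ ⊓ L₃ ≠ ⊥) (h₃₄ : L₃ ⊓ L₄ ≠ ⊥) (h₄₁ : L₄ ⊓ L₁ ≠ ⊥)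
    (h₁₃ : L₁ ⊓ L₃ = ⊥) (h₂₄ : L₂ ⊓ L₄ = ⊥) :
    3 * q ≤ {L | L ∈ 𝓛 ∧ L ≤ L₁ ⊔ L₃}.ncard := by
  have r₁ := hline L₁ h₁
  have r₂ := hline L₂ h₂
  have r₃ := hline L₃ h₃
  have r₄ := hline L₄ h₄
  have hL₂ : L₂ ≤ L₁ ⊔ L₃ := le_sup_of_inf_ne_bot r₂ h₁₃ (inf_comm L₁ L₂ ▸ h₁₂) h₂₃
  have hL₄ : L₄ ≤ L₁ ⊔ L₃ := le_sup_of_inf_ne_bot r₄ h₁₃ h₄₁ (inf_comm L₃ L₄ ▸ h₃₄)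
  have p₁ := finrank_sup_eq_three r₁ r₂ h₁₂ne h₁₂
  have p₂ := finrank_sup_eq_three r₂ r₃ h₂₃ne h₂₃
  have p₃ := finrank_sup_eq_three r₃ r₄ h₃₄ne h₃₄
  have d₁₂ : L₁ ⊔ L₂ ≠ L₂ ⊔ L₃ := ne_of_inf_eq_bot h₁₃ le_sup_left le_sup_right (by omega)
  have d₁₃ : L₁ ⊔ L₂ ≠ L₃ ⊔ L₄ := ne_of_inf_eq_bot h₁₃ le_sup_left le_sup_left (by omega)
  have d₂₃ : L₂ ⊔ L₃ ≠ L₃ ⊔ L₄ := ne_of_inf_eq_bot h₂₄ le_sup_left le_sup_right (by omega)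
  have hsub : {L | L ∈ 𝓛 ∧ L ≤ L₁ ⊔ L₂} ∪ {L | L ∈ 𝓛 ∧ L ≤ L₂ ⊔ L₃} ∪
      {L | L ∈ 𝓛 ∧ L ≤ L₃ ⊔ L₄} ⊆ {L | L ∈ 𝓛 ∧ L ≤ L₁ ⊔ L₃} := by
    rintro L ((⟨hL, hLπ⟩ | ⟨hL, hLπ⟩) | ⟨hL, hLπ⟩)
    · exact ⟨hL, hLπ.trans (sup_le le_sup_left hL₂)⟩
    · exact ⟨hL, hLπ.trans (sup_le hL₂ le_sup_right)⟩
    · exact ⟨hL, hLπ.trans (sup_le le_sup_right hL₄)⟩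
  have := Set.ncard_le_ncard hsub (Set.toFinite _)
  have := Set.ncard_add_ncard_add_ncard_le (A := {L | L ∈ 𝓛 ∧ L ≤ L₁ ⊔ L₂})
    (B := {L | L ∈ 𝓛 ∧ L ≤ L₂ ⊔ L₃}) (C := {L | L ∈ 𝓛 ∧ L ≤ L₃ ⊔ L₄})
  have := ncard_lines_le_sup_eq_succ hPl h₁ h₂ h₁₂ne p₁
  have := ncard_lines_le_sup_eq_succ hPl h₂ h₃ h₂₃ne p₂
  have := ncard_lines_le_sup_eq_succ hPl h₃ h₄ h₃₄ne p₃
  have := ncard_lines_le_inter_le_one hline p₁ p₂ d₁₂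
  have := ncard_lines_le_inter_le_one hline p₁ p₃ d₁₃
  have := ncard_lines_le_inter_le_one hline p₂ p₃ d₂₃
  omega

end LineSet

theorem no_quadrangle_of_Pt_Pl_Sd_general
    (q : ℕ) (hq : 2 ≤ q) (F : Type) [Field F] [Fintype F]
    (𝓛 : Set (Submodule F (Fin 8 → F)))
    (hline : ∀ L ∈ 𝓛, Module.finrank F L = 2)
    (hPl : ∀ π : Submodule F (Fin 8 → F), Module.finrank F π = 3 →
      {L | L ∈ 𝓛 ∧ L ≤ π}.ncard = 0 ∨ {L | L ∈ 𝓛 ∧ L ≤ π}.ncard = 1 ∨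
        {L | L ∈ 𝓛 ∧ L ≤ π}.ncard = q + 1)
    (hSd : ∀ S : Submodule F (Fin 8 → F), Module.finrank F S = 4 →
      {L | L ∈ 𝓛 ∧ L ≤ S}.ncard = 0 ∨ {L | L ∈ 𝓛 ∧ L ≤ S}.ncard = 1 ∨
        {L | L ∈ 𝓛 ∧ L ≤ S}.ncard = q + 1 ∨ {L | L ∈ 𝓛 ∧ L ≤ S}.ncard = 2 * q + 1) :
    ¬ ∃ L₁ L₂ L₃ L₄ : Submodule F (Fin 8 → F),
      L₁ ∈ 𝓛 ∧ L₂ ∈ 𝓛 ∧ L₃ ∈ 𝓛 ∧ L₄ ∈ 𝓛 ∧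
      L₁ ≠ L₂ ∧ L₁ ≠ L₃ ∧ L₁ ≠ L₄ ∧ L₂ ≠ L₃ ∧ L₂ ≠ L₄ ∧ L₃ ≠ L₄ ∧
      L₁ ⊓ L₂ ≠ ⊥ ∧ L₂ ⊓ L₃ ≠ ⊥ ∧ L₃ ⊓ L₄ ≠ ⊥ ∧ L₄ ⊓ L₁ ≠ ⊥ ∧
      L₁ ⊓ L₃ = ⊥ ∧ L₂ ⊓ L₄ = ⊥ := by
  rintro ⟨L₁, L₂, L₃, L₄, h₁, h₂, h₃, h₄, h₁₂ne, -, -, h₂₃ne, -, h₃₄ne,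
    h₁₂, h₂₃, h₃₄, h₄₁, h₁₃, h₂₄⟩
  have hS : finrank F ↥(L₁ ⊔ L₃) = 4 := by
    rw [finrank_sup_of_inf_eq_bot h₁₃, hline L₁ h₁, hline L₃ h₃]
  have := three_mul_le_ncard_lines_le_sup_of_quadrangle hline hPl h₁ h₂ h₃ h₄
    h₁₂ne h₂₃ne h₃₄ne h₁₂ h₂₃ h₃₄ h₄₁ h₁₃ h₂₄
  rcases hSd _ hS with h | h | h | h <;> omega

/-- A set of lines of PG(7,q³) satisfying (Pt), (Pl) and (Sd) contains
no quadrangle: no four distinct lines in which cyclically consecutive lines meet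
while the two pairs of non-consecutive lines have zero intersection. -/
theorem no_quadrangle_of_Pt_Pl_Sd
    (q : ℕ) (hq : 2 ≤ q) (F : Type) [Field F] [Fintype F]
    (hF : Fintype.card F = q ^ 3)
    (𝓛 : Set (Submodule F (Fin 8 → F)))
    (hline : ∀ L ∈ 𝓛, Module.finrank F L = 2)
    (hPt : ∀ p : Submodule F (Fin 8 → F), Module.finrank F p = 1 →
      {L | L ∈ 𝓛 ∧ p ≤ L}.ncard = 0 ∨ {L | L ∈ 𝓛 ∧ p ≤ L}.ncard = q + 1)
    (hPl : ∀ π : Submodule F (Fin 8 → F), Module.finrank F π = 3 →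
      {L | L ∈ 𝓛 ∧ L ≤ π}.ncard = 0 ∨ {L | L ∈ 𝓛 ∧ L ≤ π}.ncard = 1 ∨
        {L | L ∈ 𝓛 ∧ L ≤ π}.ncard = q + 1)
    (hSd : ∀ S : Submodule F (Fin 8 → F), Module.finrank F S = 4 →
      {L | L ∈ 𝓛 ∧ L ≤ S}.ncard = 0 ∨ {L | L ∈ 𝓛 ∧ L ≤ S}.ncard = 1 ∨
        {L | L ∈ 𝓛 ∧ L ≤ S}.ncard = q + 1 ∨ {L | L ∈ 𝓛 ∧ L ≤ S}.ncard = 2 * q + 1) :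
    ¬ ∃ L₁ L₂ L₃ L₄ : Submodule F (Fin 8 → F),
      L₁ ∈ 𝓛 ∧ L₂ ∈ 𝓛 ∧ L₃ ∈ 𝓛 ∧ L₄ ∈ 𝓛 ∧
      L₁ ≠ L₂ ∧ L₁ ≠ L₃ ∧ L₁ ≠ L₄ ∧ L₂ ≠ L₃ ∧ L₂ ≠ L₄ ∧ L₃ ≠ L₄ ∧
      L₁ ⊓ L₂ ≠ ⊥ ∧ L₂ ⊓ L₃ ≠ ⊥ ∧ L₃ ⊓ L₄ ≠ ⊥ ∧ L₄ ⊓ L₁ ≠ ⊥ ∧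
      L₁ ⊓ L₃ = ⊥ ∧ L₂ ⊓ L₄ = ⊥ :=
  no_quadrangle_of_Pt_Pl_Sd_general q hq F 𝓛 hline hPl hSd
end

section
/- Let q ≥ 2 and let 𝓛 be a set of lines of PG(7,q^3) satisfying properties (Pt), (Pl) and (Sd). Let L, M, N be lines of 𝓛 such that M meets both L and N (nonzero intersections) while L and N have zero intersection. Then the subspace Σ = L + N is a solid (it has linear dimension 4) and Σ contains exactly 2q+1 lines of 𝓛. -/
/-- If 𝓛 satisfies (Pt), (Pl), (Sd) and L, M, N ∈ 𝓛 are such that M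
meets both L and N while L and N have zero intersection, then Σ = L + N is a solid
(linear dimension 4) containing exactly 2q+1 lines of 𝓛. -/
theorem solid_of_path_has_2q_add_one_lines
    (q : ℕ) (hq : 2 ≤ q) (F : Type) [Field F] [Fintype F]
    (hF : Fintype.card F = q ^ 3)
    (𝓛 : Set (Submodule F (Fin 8 → F)))
    (hline : ∀ L ∈ 𝓛, Module.finrank F L = 2)
    (hPt : ∀ p : Submodule F (Fin 8 → F), Module.finrank F p = 1 →
      {L | L ∈ 𝓛 ∧ p ≤ L}.ncard = 0 ∨ {L | L ∈ 𝓛 ∧ p ≤ L}.ncard = q + 1)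
    (hPl : ∀ π : Submodule F (Fin 8 → F), Module.finrank F π = 3 →
      {L | L ∈ 𝓛 ∧ L ≤ π}.ncard = 0 ∨ {L | L ∈ 𝓛 ∧ L ≤ π}.ncard = 1 ∨
        {L | L ∈ 𝓛 ∧ L ≤ π}.ncard = q + 1)
    (hSd : ∀ S : Submodule F (Fin 8 → F), Module.finrank F S = 4 →
      {L | L ∈ 𝓛 ∧ L ≤ S}.ncard = 0 ∨ {L | L ∈ 𝓛 ∧ L ≤ S}.ncard = 1 ∨
        {L | L ∈ 𝓛 ∧ L ≤ S}.ncard = q + 1 ∨ {L | L ∈ 𝓛 ∧ L ≤ S}.ncard = 2 * q + 1)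
    (L M N : Submodule F (Fin 8 → F))
    (hL : L ∈ 𝓛) (hM : M ∈ 𝓛) (hN : N ∈ 𝓛)
    (hLM : L ⊓ M ≠ ⊥) (hMN : M ⊓ N ≠ ⊥) (hLN : L ⊓ N = ⊥) :
    Module.finrank F ↥(L ⊔ N) = 4 ∧
      {X | X ∈ 𝓛 ∧ X ≤ L ⊔ N}.ncard = 2 * q + 1 := by
  classical
  haveI hfin : Finite (Submodule F (Fin 8 → F)) :=
    Finite.of_injective (fun p => (p : Set (Fin 8 → F))) SetLike.coe_injective
  have hLr : Module.finrank F L = 2 := hline L hL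
  have hMr : Module.finrank F M = 2 := hline M hM
  have hNr : Module.finrank F N = 2 := hline N hN
  -- finrank of a point of intersection
  have hrank1 : ∀ A B : Submodule F (Fin 8 → F), A ∈ 𝓛 → B ∈ 𝓛 → A ⊓ B ≠ ⊥ →
      A ≠ B → Module.finrank F ↥(A ⊓ B) = 1 := by
    intro A B hA hB hAB hne
    have hAr := hline A hA
    have hBr := hline B hB
    have h1 : 0 < Module.finrank F ↥(A ⊓ B) :=
      Module.finrank_pos_iff.mpr (Submodule.nontrivial_iff_ne_bot.mpr hAB)
    have h2 : Module.finrank F ↥(A ⊓ B) ≤ 2 := by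
      have := Submodule.finrank_mono (inf_le_left : A ⊓ B ≤ A)
      omega
    interval_cases h : Module.finrank F ↥(A ⊓ B)
    · rfl
    · exfalso
      have hA' : A ⊓ B = A := Submodule.eq_of_le_of_finrank_eq inf_le_left (by omega)
      have hB' : A ⊓ B = B := Submodule.eq_of_le_of_finrank_eq inf_le_right (by omega)
      exact hne (hA'.symm.trans hB')
  have hLbot : L ≠ ⊥ := by
    intro h; rw [h] at hLr; simp [finrank_bot] at hLr
  have hLneN : L ≠ N := by
    intro h; rw [h, inf_idem] at hLN; rw [hLN] at hNr; simp [finrank_bot] at hNr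
  have hLneM : L ≠ M := by
    intro h; rw [← h] at hMN; exact hMN hLN
  have hMneN : M ≠ N := by
    intro h; rw [h] at hLM; exact hLM hLN
  have hx : Module.finrank F ↥(L ⊓ M) = 1 := hrank1 L M hL hM hLM hLneM
  have hy : Module.finrank F ↥(M ⊓ N) = 1 := hrank1 M N hM hN hMN hMneN
  set x := L ⊓ M with hxdef
  set y := M ⊓ N with hydef
  -- dimension of the solid
  have hsupLN : Module.finrank F ↥(L ⊔ N) = 4 := by
    have := Submodule.finrank_sup_add_finrank_inf_eq L N
    rw [hLN, hLr, hNr, finrank_bot] at this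
    omega
  refine ⟨hsupLN, ?_⟩
  -- x ⊓ N = ⊥ and y ⊓ L = ⊥
  have hxN : x ⊓ N = ⊥ := by
    rw [← le_bot_iff, ← hLN]
    exact inf_le_inf_right N inf_le_left
  have hLy : L ⊓ y = ⊥ := by
    rw [← le_bot_iff, ← hLN]
    exact inf_le_inf_left L inf_le_right
  -- planes
  have hπ1 : Module.finrank F ↥(x ⊔ N) = 3 := by
    have := Submodule.finrank_sup_add_finrank_inf_eq x N
    rw [hxN, hx, hNr, finrank_bot] at this
    omega
  have hπ2 : Module.finrank F ↥(L ⊔ y) = 3 := by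
    have := Submodule.finrank_sup_add_finrank_inf_eq L y
    rw [hLy, hy, hLr, finrank_bot] at this
    omega
  -- M = x ⊔ y
  have hxy : x ⊓ y = ⊥ := by
    rw [← le_bot_iff, ← hLN]
    exact inf_le_inf inf_le_left inf_le_right
  have hMxy : M = x ⊔ y := by
    have hle : x ⊔ y ≤ M := sup_le inf_le_right inf_le_left
    have := Submodule.finrank_sup_add_finrank_inf_eq x y
    rw [hxy, hx, hy, finrank_bot] at this
    exact (Submodule.eq_of_le_of_finrank_eq hle (by omega)).symm
  have hMπ1 : M ≤ x ⊔ N := by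
    rw [hMxy]
    exact sup_le_sup_left inf_le_right x
  have hMπ2 : M ≤ L ⊔ y := by
    rw [hMxy]
    exact sup_le_sup_right inf_le_left y
  have hπ1S : x ⊔ N ≤ L ⊔ N := sup_le_sup_right inf_le_left N
  have hπ2S : L ⊔ y ≤ L ⊔ N := sup_le_sup_left inf_le_right L
  -- π₁ ⊔ π₂ = L ⊔ N
  have hsupππ : (x ⊔ N) ⊔ (L ⊔ y) = L ⊔ N := by
    apply le_antisymm (sup_le hπ1S hπ2S)
    exact sup_le (le_trans le_sup_left le_sup_right) (le_trans le_sup_right le_sup_left)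
  -- π₁ ⊓ π₂ = M
  have hinfππ : (x ⊔ N) ⊓ (L ⊔ y) = M := by
    have hle : M ≤ (x ⊔ N) ⊓ (L ⊔ y) := le_inf hMπ1 hMπ2
    have h4 := Submodule.finrank_sup_add_finrank_inf_eq (x ⊔ N) (L ⊔ y)
    rw [hsupππ, hsupLN, hπ1, hπ2] at h4
    exact (Submodule.eq_of_le_of_finrank_eq hle (by omega)).symm
  -- line sets in the two planes
  set S1 := {X | X ∈ 𝓛 ∧ X ≤ x ⊔ N} with hS1def
  set S2 := {X | X ∈ 𝓛 ∧ X ≤ L ⊔ y} with hS2def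
  have hS1fin : S1.Finite := Set.toFinite _
  have hS2fin : S2.Finite := Set.toFinite _
  have hplane_count : ∀ (π : Submodule F (Fin 8 → F)) (A B : Submodule F (Fin 8 → F)),
      Module.finrank F π = 3 → A ∈ 𝓛 → B ∈ 𝓛 → A ≠ B → A ≤ π → B ≤ π →
      {X | X ∈ 𝓛 ∧ X ≤ π}.ncard = q + 1 := by
    intro π A B hπ hA hB hAB hAπ hBπ
    have h2 : 2 ≤ {X | X ∈ 𝓛 ∧ X ≤ π}.ncard := by
      have hsub : {A, B} ⊆ {X | X ∈ 𝓛 ∧ X ≤ π} := by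
        intro Z hZ
        rcases hZ with rfl | hZ
        · exact ⟨hA, hAπ⟩
        · rw [Set.mem_singleton_iff] at hZ; subst hZ; exact ⟨hB, hBπ⟩
      calc 2 = ({A, B} : Set _).ncard := (Set.ncard_pair hAB).symm
        _ ≤ _ := Set.ncard_le_ncard hsub (Set.toFinite _)
    rcases hPl π hπ with h | h | h <;> omega
  have hS1card : S1.ncard = q + 1 := hplane_count _ M N hπ1 hM hN hMneN hMπ1 le_sup_right
  have hS2card : S2.ncard = q + 1 := hplane_count _ L M hπ2 hL hM hLneM le_sup_left hMπ2
  -- S1 ∩ S2 = {M}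
  have hS12 : S1 ∩ S2 = {M} := by
    apply Set.eq_singleton_iff_unique_mem.mpr
    constructor
    · exact ⟨⟨hM, hMπ1⟩, ⟨hM, hMπ2⟩⟩
    · rintro Z ⟨⟨hZ𝓛, hZ1⟩, ⟨_, hZ2⟩⟩
      have hZM : Z ≤ M := hinfππ ▸ le_inf hZ1 hZ2
      exact Submodule.eq_of_le_of_finrank_eq hZM (by rw [hline Z hZ𝓛, hMr])
  -- union count
  have hunion : (S1 ∪ S2).ncard = 2 * q + 1 := by
    have := Set.ncard_union_add_ncard_inter S1 S2 hS1fin hS2fin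
    rw [hS12, hS1card, hS2card, Set.ncard_singleton] at this
    omega
  -- the union is contained in the solid's line set
  have hsub : S1 ∪ S2 ⊆ {X | X ∈ 𝓛 ∧ X ≤ L ⊔ N} := by
    rintro Z (⟨hZ𝓛, hZ⟩ | ⟨hZ𝓛, hZ⟩)
    · exact ⟨hZ𝓛, le_trans hZ hπ1S⟩
    · exact ⟨hZ𝓛, le_trans hZ hπ2S⟩
  have hge : 2 * q + 1 ≤ {X | X ∈ 𝓛 ∧ X ≤ L ⊔ N}.ncard := by
    rw [← hunion]
    exact Set.ncard_le_ncard hsub (Set.toFinite _)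
  rcases hSd (L ⊔ N) hsupLN with h | h | h | h <;> omega
end

section
/- Let 𝓛 be a set of lines of PG(7,q^3) and let W ⊆ V' ⊆ U be linear subspaces of V = F^8 such that every line of 𝓛 contained in U has nonzero intersection with W. If a point x is 𝓛-isolated in V', then either x is 𝓛-isolated in U, or x ≤ W and x is 𝓛-isolated in W. In particular, if every line of 𝓛 contained in U meets W and neither U nor W contains any 𝓛-isolated point, then V' contains no 𝓛-isolated point. -/
/-- Let W ⊆ V' ⊆ U be subspaces such that every line of 𝓛 contained
in U meets W. If a point x is 𝓛-isolated in V', then x is 𝓛-isolated in U, or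
x ≤ W and x is 𝓛-isolated in W. In particular, if neither U nor W contains an
𝓛-isolated point, then V' contains no 𝓛-isolated point.
(A point x on at least one line of 𝓛 is 𝓛-isolated in a subspace S if x ≤ S and
no line of 𝓛 through x is contained in S.) -/
theorem isolated_points_in_sandwiched_subspace
    (q : ℕ) (hq : 2 ≤ q) (F : Type) [Field F] [Fintype F]
    (hF : Fintype.card F = q ^ 3)
    (𝓛 : Set (Submodule F (Fin 8 → F)))
    (hline : ∀ L ∈ 𝓛, Module.finrank F L = 2)
    (W V' U : Submodule F (Fin 8 → F))
    (hWV : W ≤ V') (hVU : V' ≤ U)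
    (hmeet : ∀ L ∈ 𝓛, L ≤ U → L ⊓ W ≠ ⊥) :
    (∀ x : Submodule F (Fin 8 → F), Module.finrank F x = 1 → (∃ L ∈ 𝓛, x ≤ L) →
      (x ≤ V' ∧ ¬ ∃ L ∈ 𝓛, x ≤ L ∧ L ≤ V') →
      ((x ≤ U ∧ ¬ ∃ L ∈ 𝓛, x ≤ L ∧ L ≤ U) ∨
        (x ≤ W ∧ ¬ ∃ L ∈ 𝓛, x ≤ L ∧ L ≤ W))) ∧
    ((¬ ∃ x : Submodule F (Fin 8 → F), Module.finrank F x = 1 ∧ (∃ L ∈ 𝓛, x ≤ L) ∧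
        x ≤ U ∧ ¬ ∃ L ∈ 𝓛, x ≤ L ∧ L ≤ U) →
      (¬ ∃ x : Submodule F (Fin 8 → F), Module.finrank F x = 1 ∧ (∃ L ∈ 𝓛, x ≤ L) ∧
        x ≤ W ∧ ¬ ∃ L ∈ 𝓛, x ≤ L ∧ L ≤ W) →
      ¬ ∃ x : Submodule F (Fin 8 → F), Module.finrank F x = 1 ∧ (∃ L ∈ 𝓛, x ≤ L) ∧
        x ≤ V' ∧ ¬ ∃ L ∈ 𝓛, x ≤ L ∧ L ≤ V') := by
  have main : ∀ x : Submodule F (Fin 8 → F), Module.finrank F x = 1 →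
      (∃ L ∈ 𝓛, x ≤ L) →
      (x ≤ V' ∧ ¬ ∃ L ∈ 𝓛, x ≤ L ∧ L ≤ V') →
      ((x ≤ U ∧ ¬ ∃ L ∈ 𝓛, x ≤ L ∧ L ≤ U) ∨
        (x ≤ W ∧ ¬ ∃ L ∈ 𝓛, x ≤ L ∧ L ≤ W)) := by
    rintro x hx1 _ ⟨hxV, hniso⟩
    by_cases hU : ∃ L ∈ 𝓛, x ≤ L ∧ L ≤ U
    · right
      obtain ⟨L, hL, hxLe, hLU⟩ := hU
      obtain ⟨w, hw, hw0⟩ := Submodule.exists_mem_ne_zero_of_ne_bot (hmeet L hL hLU)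
      have hwL : w ∈ L := hw.1
      have hwW : w ∈ W := hw.2
      have hspanL : Submodule.span F {w} ≤ L := by
        rw [Submodule.span_singleton_le_iff_mem]; exact hwL
      have hwx : w ∈ x := by
        by_contra hwx
        have hlt : x < x ⊔ Submodule.span F {w} := by
          refine lt_of_le_of_ne le_sup_left ?_
          intro h
          have : w ∈ x ⊔ Submodule.span F {w} :=
            Submodule.mem_sup_right (Submodule.mem_span_singleton_self w)
          rw [← h] at this
          exact hwx this
        have hle : x ⊔ Submodule.span F {w} ≤ L := sup_le hxLe hspanL
        have h2 : 2 ≤ Module.finrank F (x ⊔ Submodule.span F {w} : Submodule F (Fin 8 → F)) := by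
          have := Submodule.finrank_lt_finrank_of_lt hlt
          omega
        have heq : x ⊔ Submodule.span F {w} = L := by
          apply Submodule.eq_of_le_of_finrank_le hle
          rw [hline L hL]; exact h2
        have hspanW : Submodule.span F {w} ≤ W := by
          rw [Submodule.span_singleton_le_iff_mem]; exact hwW
        exact hniso ⟨L, hL, hxLe, heq ▸ sup_le hxV (hspanW.trans hWV)⟩
      have hxeq : x = Submodule.span F {w} := by
        have hle : Submodule.span F {w} ≤ x := by
          rw [Submodule.span_singleton_le_iff_mem]; exact hwx
        refine (Submodule.eq_of_le_of_finrank_le hle ?_).symm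
        rw [finrank_span_singleton hw0, hx1]
      have hxW : x ≤ W := by
        rw [hxeq, Submodule.span_singleton_le_iff_mem]; exact hwW
      refine ⟨hxW, fun ⟨M, hM, hxM, hMW⟩ => hniso ⟨M, hM, hxM, hMW.trans hWV⟩⟩
    · exact Or.inl ⟨hxV.trans hVU, hU⟩
  refine ⟨main, fun hU hW ⟨x, hx1, hxL, hxiso⟩ => ?_⟩
  rcases main x hx1 hxL hxiso with h | h
  · exact hU ⟨x, hx1, hxL, h⟩
  · exact hW ⟨x, hx1, hxL, h⟩
end

section
/- Let Γ be a finite weak generalized hexagon of order (s,t) and let S be a set of lines of Γ that are mutually opposite (any two distinct lines of S are at distance 6 in the incidence graph). Then |S| ≤ s·t^2 + 1. -/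
/-- The incidence graph of a point-line geometry. -/
def IncidenceGraph {P L : Type*} (I : P → L → Prop) : SimpleGraph (P ⊕ L) where
  Adj x y :=
    (∃ p l, x = Sum.inl p ∧ y = Sum.inr l ∧ I p l) ∨
    (∃ p l, x = Sum.inr l ∧ y = Sum.inl p ∧ I p l)
  symm := by
    constructor
    rintro x y (⟨p, l, hx, hy, h⟩ | ⟨p, l, hx, hy, h⟩)
    · exact Or.inr ⟨p, l, hy, hx, h⟩
    · exact Or.inl ⟨p, l, hy, hx, h⟩
  loopless := by
    constructor
    rintro x (⟨p, l, hx, hy, h⟩ | ⟨p, l, hx, hy, h⟩) <;> subst hx <;> simp_all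

/-- A finite weak generalized hexagon: the incidence graph is connected, has girth
exactly 12, and has all pairwise distances at most 6. -/
def IsWeakGenHexagon {P L : Type*} (I : P → L → Prop) : Prop :=
  (IncidenceGraph I).Connected ∧ (IncidenceGraph I).girth = 12 ∧
    ∀ x y, (IncidenceGraph I).dist x y ≤ 6

/-- The geometry has order (s,t): every line is incident with exactly s+1 points
and every point with exactly t+1 lines. -/
def HasOrder {P L : Type*} (I : P → L → Prop) (s t : ℕ) : Prop :=
  (∀ l, {p | I p l}.ncard = s + 1) ∧ (∀ p, {l | I p l}.ncard = t + 1)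

/-!
Fix `l ∈ S` and a point `p` on `l`. As the incidence graph is bipartite of diameter 6, every other
`m ∈ S` is at distance 5 from `p`, so a geodesic from `p` to `m` begins with a path `p, a, x, b`
that leaves the flag `(p, l)` without backtracking and has `b` within distance 2 of `m`.
Two lines of `S` cannot share such a path, since they would be at distance at most 4, and
there are only `t · s · t` such paths.
-/

open SimpleGraph Set

lemma SimpleGraph.exists_adj_dist_eq_of_dist_eq_add_one {V : Type*} {G : SimpleGraph V}
    {u v : V} {n : ℕ} (h : G.dist u v = n + 1) : ∃ w, G.Adj u w ∧ G.dist w v = n := by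
  obtain ⟨q, hq⟩ := exists_walk_of_dist_ne_zero (G := G) (u := u) (v := v) (by omega)
  cases q with
  | nil => simp at h
  | cons hadj q => ?_
  rw [Walk.length_cons, h] at hq
  refine ⟨_, hadj, le_antisymm ?_ ?_⟩
  · exact (dist_le q).trans_eq (by omega)
  · have := hadj.reachable.dist_triangle_left v
    rw [h, dist_eq_one_iff_adj.mpr hadj] at this
    omega

lemma Set.ncard_le_ncard_mul_of_ncard_slice_le {α β : Type*} [Finite α] [Finite β]
    {T : Set (α × β)} {A : Set α} {n : ℕ} (hA : ∀ q ∈ T, q.1 ∈ A)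
    (hn : ∀ a ∈ A, {b | (a, b) ∈ T}.ncard ≤ n) : T.ncard ≤ A.ncard * n := by
  classical
  have hAfin := A.toFinite
  calc T.ncard ≤ (⋃ a ∈ hAfin.toFinset, Prod.mk a '' {b | (a, b) ∈ T}).ncard := by
        refine ncard_le_ncard (fun q hq => ?_) (toFinite _)
        simp only [mem_iUnion, Finite.mem_toFinset, mem_image, mem_ofPred_eq]
        exact ⟨q.1, hA q hq, q.2, hq, rfl⟩
    _ ≤ ∑ a ∈ hAfin.toFinset, (Prod.mk a '' {b | (a, b) ∈ T}).ncard :=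
        Finset.set_ncard_biUnion_le _ _
    _ ≤ ∑ _a ∈ hAfin.toFinset, n := Finset.sum_le_sum fun a ha =>
        (ncard_image_le (toFinite _)).trans (hn a (by simpa using ha))
    _ = A.ncard * n := by rw [Finset.sum_const, smul_eq_mul, ncard_eq_toFinset_card A hAfin]

namespace IncidenceGraph

variable {P L : Type*} {I : P → L → Prop} {p : P} {l m : L}

@[simp]
lemma adj_inl_inr : (IncidenceGraph I).Adj (.inl p) (.inr l) ↔ I p l := by
  simp [IncidenceGraph]

@[simp]
lemma adj_inr_inl : (IncidenceGraph I).Adj (.inr l) (.inl p) ↔ I p l := by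
  simp [IncidenceGraph]

@[simp]
lemma not_adj_inl_inl {p' : P} : ¬(IncidenceGraph I).Adj (.inl p) (.inl p') := by
  simp [IncidenceGraph]

@[simp]
lemma not_adj_inr_inr {l' : L} : ¬(IncidenceGraph I).Adj (.inr l) (.inr l') := by
  simp [IncidenceGraph]

def sideColoring (I : P → L → Prop) : (IncidenceGraph I).Coloring Bool :=
  Coloring.mk Sum.isLeft fun {v w} hvw => by
    rcases v with _ | _ <;> rcases w with _ | _ <;> simp_all

lemma odd_dist_inl_inr (hconn : (IncidenceGraph I).Connected) :
    Odd ((IncidenceGraph I).dist (.inl p) (.inr l)) := by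
  obtain ⟨w, hw⟩ := hconn.exists_walk_length_eq_dist (.inl p) (.inr l)
  rw [← hw, (sideColoring I).odd_length_iff_not_congr]
  exact iff_of_false (· rfl) Bool.false_ne_true

lemma dist_inl_eq_five_of_dist_inr_eq_six (hconn : (IncidenceGraph I).Connected)
    (hpm : (IncidenceGraph I).dist (.inl p) (.inr m) ≤ 6) (hpl : I p l)
    (hlm : (IncidenceGraph I).dist (.inr l) (.inr m) = 6) :
    (IncidenceGraph I).dist (.inl p) (.inr m) = 5 := by
  have hodd := odd_dist_inl_inr (p := p) (l := m) hconn
  have htri := hconn.dist_triangle (u := .inr l) (v := .inl p) (w := .inr m)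
  rw [hlm, dist_comm, dist_eq_one_iff_adj.mpr (adj_inl_inr.mpr hpl)] at htri
  obtain ⟨k, hk⟩ := hodd
  omega

end IncidenceGraph

section Hexagon

variable {P L : Type*} {I : P → L → Prop} {p : P} {l m : L}

/-- Paths `p, a, x, b` in the incidence graph, encoded as `(a, x, b)`, that leave the flag
`(p, l)` without backtracking. -/
def nonBacktrackingPaths (I : P → L → Prop) (p : P) (l : L) : Set (L × P × L) :=
  {q | I p q.1 ∧ q.1 ≠ l ∧ I q.2.1 q.1 ∧ q.2.1 ≠ p ∧ I q.2.1 q.2.2 ∧ q.2.2 ≠ q.1}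

lemma HasOrder.ncard_points_diff_singleton {s t : ℕ} (hord : HasOrder I s t) (hpl : I p l) :
    ({x | I x l} \ {p}).ncard = s := by
  rw [ncard_sdiff_singleton_of_mem (s := {x | I x l}) hpl, hord.1 l, Nat.add_sub_cancel]

lemma HasOrder.ncard_lines_diff_singleton {s t : ℕ} (hord : HasOrder I s t) (hpl : I p l) :
    ({b | I p b} \ {l}).ncard = t := by
  rw [ncard_sdiff_singleton_of_mem (s := {b | I p b}) hpl, hord.2 p, Nat.add_sub_cancel]

lemma ncard_nonBacktrackingPaths_le [Finite P] [Finite L] {s t : ℕ} (hord : HasOrder I s t)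
    (hpl : I p l) : (nonBacktrackingPaths I p l).ncard ≤ s * t ^ 2 := by
  have hslice : ∀ a ∈ {a | I p a} \ {l},
      {xb : P × L | (a, xb) ∈ nonBacktrackingPaths I p l}.ncard ≤ s * t := by
    rintro a ⟨hpa, -⟩
    rw [← hord.ncard_points_diff_singleton hpa]
    refine ncard_le_ncard_mul_of_ncard_slice_le (fun xb hxb => ⟨hxb.2.2.1, hxb.2.2.2.1⟩) ?_
    rintro x ⟨hxa, -⟩
    rw [← hord.ncard_lines_diff_singleton hxa]
    exact ncard_le_ncard (fun b hb => ⟨hb.2.2.2.2.1, hb.2.2.2.2.2⟩) (toFinite _)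
  calc (nonBacktrackingPaths I p l).ncard ≤ ({a | I p a} \ {l}).ncard * (s * t) :=
        ncard_le_ncard_mul_of_ncard_slice_le (fun q hq => ⟨hq.1, hq.2.1⟩) hslice
    _ = s * t ^ 2 := by rw [hord.ncard_lines_diff_singleton hpl]; ring

lemma exists_mem_nonBacktrackingPaths_dist_le_two (hpl : I p l)
    (hpm : (IncidenceGraph I).dist (.inl p) (.inr m) = 5)
    (hlm : (IncidenceGraph I).dist (.inr l) (.inr m) = 6) :
    ∃ q ∈ nonBacktrackingPaths I p l, (IncidenceGraph I).dist (.inr q.2.2) (.inr m) ≤ 2 := by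
  obtain ⟨_ | a, hpa, ham⟩ := exists_adj_dist_eq_of_dist_eq_add_one hpm
  · simp at hpa
  obtain ⟨x | _, hax, hxm⟩ := exists_adj_dist_eq_of_dist_eq_add_one ham
  swap
  · simp at hax
  obtain ⟨_ | b, hxb, hbm⟩ := exists_adj_dist_eq_of_dist_eq_add_one hxm
  · simp at hxb
  rw [IncidenceGraph.adj_inl_inr] at hpa hxb
  rw [IncidenceGraph.adj_inr_inl] at hax
  refine ⟨(a, x, b), ⟨hpa, ?_, hax, ?_, hxb, ?_⟩, hbm.le⟩ <;> simp only [ne_eq] <;>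
    rintro rfl <;> omega

end Hexagon

theorem mutually_opposite_lines_bound_general
    {P L : Type} [Fintype P] [Fintype L] (I : P → L → Prop) (s t : ℕ)
    (hΓ : IsWeakGenHexagon I) (hord : HasOrder I s t)
    (S : Set L)
    (hopp : ∀ l ∈ S, ∀ m ∈ S, l ≠ m →
      (IncidenceGraph I).dist (Sum.inr l) (Sum.inr m) = 6) :
    S.ncard ≤ s * t ^ 2 + 1 := by
  obtain ⟨hconn, -, hdiam⟩ := hΓ
  rcases S.eq_empty_or_nonempty with rfl | ⟨l, hl⟩
  · simp
  obtain ⟨p, hpl⟩ : ∃ p, I p l :=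
    nonempty_of_ncard_ne_zero (s := {p | I p l}) (by rw [hord.1 l]; omega)
  have hnear : ∀ m ∈ S \ {l}, ∃ q ∈ nonBacktrackingPaths I p l,
      (IncidenceGraph I).dist (.inr q.2.2) (.inr m) ≤ 2 := by
    rintro m ⟨hm, hml⟩
    have hlm := hopp l hl m hm (Ne.symm hml)
    exact exists_mem_nonBacktrackingPaths_dist_le_two hpl
      (IncidenceGraph.dist_inl_eq_five_of_dist_inr_eq_six hconn (hdiam _ _) hpl hlm) hlm
  have : Nonempty (L × P × L) := ⟨(l, p, l)⟩
  choose! F hFpath hFnear using hnear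
  have hFinj : InjOn F (S \ {l}) := by
    intro m hm m' hm' hFF
    by_contra hne
    have hm_near := hFnear m hm
    have hm'_near := hFnear m' hm'
    rw [hFF, SimpleGraph.dist_comm] at hm_near
    have htri := hconn.dist_triangle (u := .inr m) (v := .inr (F m').2.2) (w := .inr m')
    rw [hopp m hm.1 m' hm'.1 hne] at htri
    omega
  calc S.ncard = (S \ {l}).ncard + 1 := (ncard_sdiff_singleton_add_one hl).symm
    _ ≤ (nonBacktrackingPaths I p l).ncard + 1 := by
        gcongr; exact ncard_le_ncard_of_injOn F hFpath hFinj (toFinite _)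
    _ ≤ s * t ^ 2 + 1 := by gcongr; exact ncard_nonBacktrackingPaths_le hord hpl

/-- In a finite weak generalized hexagon of order (s,t), a set of
mutually opposite lines (pairwise at distance 6 in the incidence graph) has at most
s·t²+1 elements. -/
theorem mutually_opposite_lines_bound
    {P L : Type} [Fintype P] [Fintype L] (I : P → L → Prop) (s t : ℕ)
    (hs : 1 ≤ s) (ht : 1 ≤ t)
    (hΓ : IsWeakGenHexagon I) (hord : HasOrder I s t)
    (S : Set L)
    (hopp : ∀ l ∈ S, ∀ m ∈ S, l ≠ m →
      (IncidenceGraph I).dist (Sum.inr l) (Sum.inr m) = 6) :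
    S.ncard ≤ s * t ^ 2 + 1 :=
  mutually_opposite_lines_bound_general I s t hΓ hord S hopp
end
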